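/- arXiv:1009.1184 — 3 statements merged into one kernel-verified Lean document; each statement's English description precedes it below -/
import Mathlib

section
/- Let Λ be a finitely aligned P-graph, μ ∈ Λ, and E a finite exhaustive subset of s(μ)Λ. If U is an ultrafilter of Λ containing μ, then there exists α ∈ E such that μα ∈ U. -/
universe u

/-- A quasi-lattice ordered group in the sense of Nica: a (discrete) group `G` together
with a subsemigroup `P` containing the identity with `P ∩ P⁻¹ = {1}`, such that under the
partial order `p ≤ q ↔ p⁻¹ * q ∈ P`, any pair of elements of `G` with a common upper bound
in `P` has a least common upper bound in `P`. -/
structure QLOGroup (G : Type u) [Group G] where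
  P : Set G
  one_mem : (1 : G) ∈ P
  mul_mem : ∀ {p q : G}, p ∈ P → q ∈ P → p * q ∈ P
  eq_one_of_mem_inv_mem : ∀ p : G, p ∈ P → p⁻¹ ∈ P → p = 1
  lub_exists : ∀ p q : G, (∃ r ∈ P, p⁻¹ * r ∈ P ∧ q⁻¹ * r ∈ P) →
    ∃ r ∈ P, p⁻¹ * r ∈ P ∧ q⁻¹ * r ∈ P ∧
      ∀ s ∈ P, p⁻¹ * s ∈ P → q⁻¹ * s ∈ P → r⁻¹ * s ∈ P

namespace QLOGroup

variable {G : Type u} [Group G]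

/-- The left-invariant partial order on `G` induced by `P`. -/
def le (Q : QLOGroup G) (p q : G) : Prop := p⁻¹ * q ∈ Q.P

/-- `s` is the least common upper bound in `P` of `p` and `q` (i.e. `s = p ∨ q < ∞`). -/
def IsLub (Q : QLOGroup G) (p q s : G) : Prop :=
  s ∈ Q.P ∧ Q.le p s ∧ Q.le q s ∧ ∀ t ∈ Q.P, Q.le p t → Q.le q t → Q.le s t

/-- `s` is the least upper bound in `P` of the set `A` (i.e. `s = ∨A < ∞`). -/
def IsLubSet (Q : QLOGroup G) (A : Set G) (s : G) : Prop :=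
  s ∈ Q.P ∧ (∀ a ∈ A, Q.le a s) ∧ ∀ t ∈ Q.P, (∀ a ∈ A, Q.le a t) → Q.le s t

/-- `p` and `q` have a common upper bound in `P` (i.e. `p ∨ q < ∞`). -/
def HasLub (Q : QLOGroup G) (p q : G) : Prop := ∃ s, Q.IsLub p q s

/-- A subset `F` is `∨`-closed if whenever `p, q ∈ F` have `p ∨ q < ∞`, then `p ∨ q ∈ F`. -/
def VeeClosed (Q : QLOGroup G) (F : Set G) : Prop :=
  ∀ p ∈ F, ∀ q ∈ F, ∀ s, Q.IsLub p q s → s ∈ F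

/-- `F̄ = {∨A : A ⊆ F, A ≠ ∅, ∨A ≠ ∞}`. -/
def veeClosure (Q : QLOGroup G) (F : Set G) : Set G :=
  {s | ∃ A ⊆ F, A.Nonempty ∧ Q.IsLubSet A s}

end QLOGroup

/-- A `P`-graph for a quasi-lattice ordered group `(G,P)`: a countable category with a
degree functor `d` into `P` satisfying the unique factorisation property.  Composition is
written in the path order of Raeburn-Sims: `comp μ ν` is defined when `s(μ) = r(ν)` (with
`src = s = dom` and `tgt = r = cod`), and `comp` is a total function whose axioms are only
imposed on composable pairs. -/
structure PGraph {G : Type u} [Group G] (Q : QLOGroup G) where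
  Obj : Type
  Mor : Type
  countable_mor : Countable Mor
  src : Mor → Obj
  tgt : Mor → Obj
  ident : Obj → Mor
  comp : Mor → Mor → Mor
  src_ident : ∀ v, src (ident v) = v
  tgt_ident : ∀ v, tgt (ident v) = v
  src_comp : ∀ μ ν, src μ = tgt ν → src (comp μ ν) = src ν
  tgt_comp : ∀ μ ν, src μ = tgt ν → tgt (comp μ ν) = tgt μ
  id_comp : ∀ μ, comp (ident (tgt μ)) μ = μ
  comp_id : ∀ μ, comp μ (ident (src μ)) = μ
  comp_assoc : ∀ μ ν ρ, src μ = tgt ν → src ν = tgt ρ →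
    comp (comp μ ν) ρ = comp μ (comp ν ρ)
  d : Mor → G
  d_mem : ∀ μ, d μ ∈ Q.P
  d_ident : ∀ v, d (ident v) = 1
  d_comp : ∀ μ ν, src μ = tgt ν → d (comp μ ν) = d μ * d ν
  factorisation : ∀ (lam : Mor) (p q : G), p ∈ Q.P → q ∈ Q.P → d lam = p * q →
    ∃! mn : Mor × Mor, src mn.1 = tgt mn.2 ∧ lam = comp mn.1 mn.2 ∧ d mn.1 = p ∧ d mn.2 = q

namespace PGraph

variable {G : Type u} [Group G] {Q : QLOGroup G} (Λ : PGraph Q)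

/-- The prefix order: `λ ⪯ μ` iff `μ = λμ'` for some `μ'`. -/
def PrefixLe (lam mu : Λ.Mor) : Prop :=
  ∃ tail, Λ.src lam = Λ.tgt tail ∧ mu = Λ.comp lam tail

/-- The set of minimal common extensions of `μ` and `ν`. -/
def MCE (mu nu : Λ.Mor) : Set Λ.Mor :=
  {lam | Λ.PrefixLe mu lam ∧ Λ.PrefixLe nu lam ∧ Q.IsLub (Λ.d mu) (Λ.d nu) (Λ.d lam)}

/-- `Λ` is finitely aligned if all the sets `MCE(μ,ν)` are finite. -/
def FinitelyAligned : Prop := ∀ mu nu : Λ.Mor, (Λ.MCE mu nu).Finite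

/-- A filter of `Λ`: a nonempty subset that is downward closed (F1) and upward
directed (F2) for the prefix order. -/
def IsGraphFilter (U : Set Λ.Mor) : Prop :=
  U.Nonempty ∧ (∀ mu ∈ U, ∀ lam, Λ.PrefixLe lam mu → lam ∈ U) ∧
    (∀ mu ∈ U, ∀ nu ∈ U, ∃ lam ∈ U, Λ.PrefixLe mu lam ∧ Λ.PrefixLe nu lam)

/-- An ultrafilter of `Λ`: a filter maximal under inclusion. -/
def IsGraphUltrafilter (U : Set Λ.Mor) : Prop :=
  Λ.IsGraphFilter U ∧ ∀ V, Λ.IsGraphFilter V → U ⊆ V → U = V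

/-- `λ·U = ⋃_{μ ∈ U} {α : α ⪯ λμ}`. -/
def actFwd (lam : Λ.Mor) (U : Set Λ.Mor) : Set Λ.Mor :=
  {a | ∃ mu ∈ U, Λ.PrefixLe a (Λ.comp lam mu)}

/-- `λ*·V = {μ : λμ ∈ V}`. -/
def actBwd (lam : Λ.Mor) (V : Set Λ.Mor) : Set Λ.Mor :=
  {mu | Λ.src lam = Λ.tgt mu ∧ Λ.comp lam mu ∈ V}

/-- `(μ,ν)` is a balanced pair: `s(μ) = s(ν)` and `d(μ) = d(ν)`. -/
def Balanced (mu nu : Λ.Mor) : Prop := Λ.src mu = Λ.src nu ∧ Λ.d mu = Λ.d nu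

/-- The pairs `(α,β)` with `να = ξβ ∈ MCE(ν,ξ)`. -/
def MCEpairs (nu xi : Λ.Mor) : Set (Λ.Mor × Λ.Mor) :=
  {p | Λ.src nu = Λ.tgt p.1 ∧ Λ.src xi = Λ.tgt p.2 ∧
    Λ.comp nu p.1 = Λ.comp xi p.2 ∧ Λ.comp nu p.1 ∈ Λ.MCE nu xi}

end PGraph

/-!
Suppose no `μα`, `α ∈ E`, lies in `U`. In a finitely aligned graph an ultrafilter `U` contains
every path `λ` that has a common extension with each of its members: the sets `MCE(λ, ν)`,
`ν ∈ U`, are finite and nonempty and form an inverse system over the directed set `U`, so by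
Kőnig's lemma they admit a coherent choice, whose lower closure is a filter containing `U` and
`λ`. Hence every `μα` is incompatible with some `ν_α ∈ U`. As `E` is finite, `U` contains a
common extension `μx` of `μ` and all `ν_α`; exhaustiveness of `E` makes `x` compatible with some
`α ∈ E`, and then `μα` is compatible with `μx`, hence with `ν_α`.
-/

open CategoryTheory

theorem QLOGroup.IsLub.unique {G : Type u} [Group G] {Q : QLOGroup G} {p q s t : G}
    (hs : Q.IsLub p q s) (ht : Q.IsLub p q t) : s = t := by
  have hst : s⁻¹ * t ∈ Q.P := hs.2.2.2 t ht.1 ht.2.1 ht.2.2.1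
  have hts : (s⁻¹ * t)⁻¹ ∈ Q.P := by
    rw [mul_inv_rev, inv_inv]
    exact ht.2.2.2 s hs.1 hs.2.1 hs.2.2.1
  exact inv_mul_eq_one.mp (Q.eq_one_of_mem_inv_mem _ hst hts)

namespace PGraph

variable {G : Type u} [Group G] {Q : QLOGroup G} {Λ : PGraph Q}

theorem prefixLe_refl (mu : Λ.Mor) : Λ.PrefixLe mu mu :=
  ⟨Λ.ident (Λ.src mu), (Λ.tgt_ident _).symm, (Λ.comp_id mu).symm⟩

theorem prefixLe_trans {a b c : Λ.Mor} (hab : Λ.PrefixLe a b) (hbc : Λ.PrefixLe b c) :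
    Λ.PrefixLe a c := by
  obtain ⟨t, ht, rfl⟩ := hab
  obtain ⟨s, hs, rfl⟩ := hbc
  have hts : Λ.src t = Λ.tgt s := by rwa [Λ.src_comp a t ht] at hs
  exact ⟨Λ.comp t s, by rw [Λ.tgt_comp t s hts, ht], Λ.comp_assoc a t s ht hts⟩

theorem PrefixLe.d_le {a b : Λ.Mor} (h : Λ.PrefixLe a b) : Q.le (Λ.d a) (Λ.d b) := by
  obtain ⟨t, ht, rfl⟩ := h
  rw [QLOGroup.le, Λ.d_comp a t ht, inv_mul_cancel_left]
  exact Λ.d_mem t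

theorem PrefixLe.comp_left (mu : Λ.Mor) {x y : Λ.Mor} (hmu : Λ.src mu = Λ.tgt x)
    (h : Λ.PrefixLe x y) : Λ.PrefixLe (Λ.comp mu x) (Λ.comp mu y) := by
  obtain ⟨t, ht, rfl⟩ := h
  exact ⟨t, by rw [Λ.src_comp mu x hmu, ht], (Λ.comp_assoc mu x t hmu ht).symm⟩

theorem eq_of_prefixLe_of_d_eq {a b sigma : Λ.Mor} (ha : Λ.PrefixLe a sigma)
    (hb : Λ.PrefixLe b sigma) (hd : Λ.d a = Λ.d b) : a = b := by
  obtain ⟨s, hs, hsig⟩ := ha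
  obtain ⟨t, ht, hsig'⟩ := hb
  have hds : Λ.d s = (Λ.d a)⁻¹ * Λ.d sigma := by
    rw [hsig, Λ.d_comp a s hs, inv_mul_cancel_left]
  have hdt : Λ.d t = (Λ.d a)⁻¹ * Λ.d sigma := by
    rw [hsig', Λ.d_comp b t ht, hd, inv_mul_cancel_left]
  obtain ⟨_, _, huniq⟩ := Λ.factorisation sigma (Λ.d a) ((Λ.d a)⁻¹ * Λ.d sigma)
    (Λ.d_mem a) (hds ▸ Λ.d_mem s) (mul_inv_cancel_left _ _).symm
  exact congrArg Prod.fst ((huniq (a, s) ⟨hs, hsig, rfl, hds⟩).trans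
    (huniq (b, t) ⟨ht, hsig', hd.symm, hdt⟩).symm)

theorem prefixLe_of_prefixLe_of_d_le {a tau sigma : Λ.Mor} (ha : Λ.PrefixLe a sigma)
    (htau : Λ.PrefixLe tau sigma) (hd : Q.le (Λ.d a) (Λ.d tau)) : Λ.PrefixLe a tau := by
  obtain ⟨⟨b, t⟩, ⟨hbt, rfl, hdb, -⟩, -⟩ :=
    Λ.factorisation tau (Λ.d a) ((Λ.d a)⁻¹ * Λ.d tau) (Λ.d_mem a) hd
      (mul_inv_cancel_left _ _).symm
  have hb : Λ.PrefixLe b sigma := prefixLe_trans ⟨t, hbt, rfl⟩ htau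
  rw [eq_of_prefixLe_of_d_eq ha hb hdb.symm]
  exact ⟨t, hbt, rfl⟩

theorem exists_mem_mce_prefixLe {a b sigma : Λ.Mor} (ha : Λ.PrefixLe a sigma)
    (hb : Λ.PrefixLe b sigma) : ∃ tau ∈ Λ.MCE a b, Λ.PrefixLe tau sigma := by
  obtain ⟨r, hrP, hr1, hr2, hrmin⟩ :=
    Q.lub_exists (Λ.d a) (Λ.d b) ⟨Λ.d sigma, Λ.d_mem _, ha.d_le, hb.d_le⟩
  obtain ⟨⟨tau, t⟩, ⟨htt, hsig, hdtau, -⟩, -⟩ :=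
    Λ.factorisation sigma r (r⁻¹ * Λ.d sigma) hrP (hrmin _ (Λ.d_mem _) ha.d_le hb.d_le)
      (mul_inv_cancel_left _ _).symm
  have htau : Λ.PrefixLe tau sigma := ⟨t, htt, hsig⟩
  dsimp only at hdtau
  subst hdtau
  exact ⟨tau, ⟨prefixLe_of_prefixLe_of_d_le ha htau hr1,
    prefixLe_of_prefixLe_of_d_le hb htau hr2, hrP, hr1, hr2, hrmin⟩, htau⟩

theorem mce_eq_of_prefixLe {a b x y w : Λ.Mor} (hx : x ∈ Λ.MCE a b) (hy : y ∈ Λ.MCE a b)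
    (hxw : Λ.PrefixLe x w) (hyw : Λ.PrefixLe y w) : x = y :=
  eq_of_prefixLe_of_d_eq hxw hyw (hx.2.2.unique hy.2.2)

instance : Preorder Λ.Mor where
  le := Λ.PrefixLe
  le_refl := prefixLe_refl
  le_trans _ _ _ := prefixLe_trans

/-- Sends `τ` to the element of `MCE(λ, ν)` below it, unique by `mce_eq_of_prefixLe`. -/
noncomputable def mceRestrict (lam : Λ.Mor) {nu nu' : Λ.Mor} (h : Λ.PrefixLe nu nu')
    (tau : Λ.MCE lam nu') : Λ.MCE lam nu :=
  ⟨_, (exists_mem_mce_prefixLe tau.2.1 (prefixLe_trans h tau.2.2.1)).choose_spec.1⟩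

theorem mceRestrict_prefixLe (lam : Λ.Mor) {nu nu' : Λ.Mor} (h : Λ.PrefixLe nu nu')
    (tau : Λ.MCE lam nu') : Λ.PrefixLe (mceRestrict lam h tau) tau :=
  (exists_mem_mce_prefixLe tau.2.1 (prefixLe_trans h tau.2.2.1)).choose_spec.2

theorem mceRestrict_eq {lam nu nu' : Λ.Mor} (h : Λ.PrefixLe nu nu') (tau : Λ.MCE lam nu')
    (x : Λ.MCE lam nu) (hx : Λ.PrefixLe x tau) : mceRestrict lam h tau = x :=
  Subtype.ext <|
    mce_eq_of_prefixLe (mceRestrict lam h tau).2 x.2 (mceRestrict_prefixLe lam h tau) hx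

noncomputable def mceSystem (lam : Λ.Mor) (S : Set Λ.Mor) : Sᵒᵖ ⥤ Type where
  obj nu := Λ.MCE lam nu.unop.1
  map f := TypeCat.ofHom (mceRestrict lam (leOfHom f.unop))
  map_id nu := by
    ext tau : 3
    exact mceRestrict_eq (prefixLe_refl _) tau tau (prefixLe_refl _)
  map_comp f g := by
    ext tau : 3
    exact mceRestrict_eq (leOfHom (f ≫ g).unop) tau _
      (prefixLe_trans (mceRestrict_prefixLe lam (leOfHom g.unop) _)
        (mceRestrict_prefixLe lam (leOfHom f.unop) tau))

theorem isGraphFilter_lowerClosure {S : Set Λ.Mor} (hne : S.Nonempty)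
    (hS : DirectedOn (· ≤ ·) S) : Λ.IsGraphFilter (lowerClosure S) := by
  refine ⟨hne.mono subset_lowerClosure, fun _ hmu _ hlam => (lowerClosure S).lower hlam hmu, ?_⟩
  rintro mu ⟨a, haS, hmua⟩ nu ⟨b, hbS, hnub⟩
  obtain ⟨c, hcS, hac, hbc⟩ := hS a haS b hbS
  exact ⟨c, subset_lowerClosure hcS, le_trans hmua hac, le_trans hnub hbc⟩

theorem IsGraphFilter.isDirectedOrder {U : Set Λ.Mor} (hU : Λ.IsGraphFilter U) :
    IsDirectedOrder U :=
  directedOn_iff_isDirectedOrder.mp fun mu hmu nu hnu => hU.2.2 mu hmu nu hnu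

theorem IsGraphUltrafilter.mem_of_forall_mce_nonempty (hFA : Λ.FinitelyAligned)
    {U : Set Λ.Mor} (hU : Λ.IsGraphUltrafilter U) {lam : Λ.Mor}
    (hlam : ∀ nu ∈ U, (Λ.MCE lam nu).Nonempty) : lam ∈ U := by
  have := hU.1.isDirectedOrder
  have : ∀ nu : Uᵒᵖ, Finite ((Λ.mceSystem lam U).obj nu) :=
    fun nu => (hFA lam nu.unop).to_subtype
  have : ∀ nu : Uᵒᵖ, Nonempty ((Λ.mceSystem lam U).obj nu) :=
    fun nu => (hlam _ nu.unop.2).to_subtype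
  obtain ⟨s, hs⟩ := nonempty_sections_of_finite_inverse_system (Λ.mceSystem lam U)
  let branch : U → Λ.Mor := fun nu => (s (Opposite.op nu)).1
  have hbranch : Monotone branch := fun nu nu' h => by
    change (s (Opposite.op nu)).1 ≤ (s (Opposite.op nu')).1
    rw [← hs (homOfLE h).op]
    exact mceRestrict_prefixLe lam h _
  obtain ⟨nu₀⟩ := hU.1.1.to_subtype
  have hUV : U ⊆ lowerClosure (Set.range branch) := fun nu hnu =>
    ⟨_, Set.mem_range_self ⟨nu, hnu⟩, (s (Opposite.op ⟨nu, hnu⟩)).2.2.1⟩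
  have hV := isGraphFilter_lowerClosure ⟨_, Set.mem_range_self nu₀⟩
    hbranch.directed_le.directedOn_range
  rw [hU.2 _ hV hUV]
  exact ⟨_, Set.mem_range_self nu₀, (s (Opposite.op nu₀)).2.1⟩

end PGraph

/-- If `μ ∈ Λ`, `E` is a finite exhaustive subset of `s(μ)Λ`, and `U` is an
ultrafilter of `Λ` containing `μ`, then `μα ∈ U` for some `α ∈ E`. -/
theorem stmt5 {G : Type u} [Group G] {Q : QLOGroup G} (Λ : PGraph Q)
    (hFA : Λ.FinitelyAligned) (mu : Λ.Mor) (E : Set Λ.Mor) (hEfin : E.Finite)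
    (hEsub : ∀ lam ∈ E, Λ.tgt lam = Λ.src mu)
    (hEexh : ∀ x : Λ.Mor, Λ.tgt x = Λ.src mu → ∃ lam ∈ E, (Λ.MCE x lam).Nonempty)
    (U : Set Λ.Mor) (hU : Λ.IsGraphUltrafilter U) (hmu : mu ∈ U) :
    ∃ a ∈ E, Λ.comp mu a ∈ U := by
  by_contra! hE
  have hsep (a : E) : ∃ nu : U, Λ.MCE (Λ.comp mu a) nu = ∅ := by
    by_contra! h
    exact hE a a.2 (hU.mem_of_forall_mce_nonempty hFA fun nu hnu => h ⟨nu, hnu⟩)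
  choose g hg using hsep
  have := hEfin.to_subtype
  have := hU.1.isDirectedOrder
  have : Nonempty U := ⟨⟨mu, hmu⟩⟩
  obtain ⟨M, hgM⟩ := Finite.exists_le g
  obtain ⟨⟨_, _⟩, ⟨x, hx, rfl⟩, hMnu⟩ := exists_ge_ge (⟨mu, hmu⟩ : U) M
  obtain ⟨a, haE, tau, hxtau, hatau, -⟩ := hEexh x hx.symm
  have hga : (g ⟨a, haE⟩ : Λ.Mor) ≤ Λ.comp mu tau :=
    le_trans (le_trans (hgM _) hMnu) (hxtau.comp_left mu hx)
  obtain ⟨w, hw, -⟩ :=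
    PGraph.exists_mem_mce_prefixLe (hatau.comp_left mu (hEsub a haE).symm) hga
  exact (hg ⟨a, haE⟩).subset hw
end

section
/- With θ_{μ,ν} := τ_{μ,ν} ∏_{λ∈H}(τ_{ν,ν} − τ_{νλ,νλ}) as above, if additionally τ_{μ,μ} ≠ 0 for all μ ∈ Λ and ∏_{α∈E}(τ_{μ,μ} − τ_{μα,μα}) ≠ 0 for every μ and every finite exhaustive E ⊆ s(μ)Λ∖{s(μ)}, then θ_{μ,μ} ≠ 0 for all μ ∈ Λ^p v. -/
universe u

/-- A representation of the balanced pairs `Λ *_{d,s} Λ` of `Λ` in a C*-algebra `A`: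
(B1) `τ_{μ,ν}* = τ_{ν,μ}` and
(B2) `τ_{μ,ν} τ_{ξ,η} = ∑_{να = ξβ ∈ MCE(ν,ξ)} τ_{μα,ηβ}`. -/
def PGraph.IsBalRep {G : Type u} [Group G] {Q : QLOGroup G} (Λ : PGraph Q)
    {A : Type*} [NormedRing A] [StarRing A] [CStarRing A]
    (τ : Λ.Mor → Λ.Mor → A) : Prop :=
  (∀ mu nu : Λ.Mor, Λ.Balanced mu nu → star (τ mu nu) = τ nu mu) ∧
  (∀ mu nu xi eta : Λ.Mor, Λ.Balanced mu nu → Λ.Balanced xi eta →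
    τ mu nu * τ xi eta =
      ∑ᶠ p ∈ Λ.MCEpairs nu xi, τ (Λ.comp mu p.1) (Λ.comp eta p.2))

/-- The elements `θ_{μ,ν} = τ_{μ,ν} ∏_{λ ∈ H} (τ_{ν,ν} − τ_{νλ,νλ})`, where the finite set
`H` is recorded as a duplicate-free list (the product is order-independent since the
factors commute). -/
noncomputable def PGraph.theta {G : Type u} [Group G] {Q : QLOGroup G} (Λ : PGraph Q)
    {A : Type*} [NormedRing A] [StarRing A] [CStarRing A]
    (τ : Λ.Mor → Λ.Mor → A) (H : List Λ.Mor) (mu nu : Λ.Mor) : A :=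
  τ mu nu * ((H.map fun lam => τ nu nu - τ (Λ.comp nu lam) (Λ.comp nu lam)).prod)

/-! Two cases, according to whether `H` is exhaustive at `s(μ) = v`. If it is, `τ_{μ,μ}` is
absorbed by the first factor `τ_{μ,μ} − τ_{μλ,μλ}`, so `θ_{μ,μ}` is a product that is assumed
not to vanish. If not, some `η ∈ s(μ)Λ` has no common extension with any `λ ∈ H`; then
`τ_{μη,μη} τ_{μλ,μλ} = 0` by (B2), every factor of `θ_{μ,μ}` acts as the identity on
`τ_{μη,μη}`, and `τ_{μη,μη} θ_{μ,μ} = τ_{μη,μη} ≠ 0`. -/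

namespace QLOGroup

variable {G : Type u} [Group G] (Q : QLOGroup G)

theorem le_refl (a : G) : Q.le a a := by
  simp [le, Q.one_mem]

variable {Q}

theorem le_antisymm {a b : G} (hab : Q.le a b) (hba : Q.le b a) : a = b := by
  have hinv : (a⁻¹ * b)⁻¹ ∈ Q.P := by simpa [le] using hba
  exact inv_mul_eq_one.mp (Q.eq_one_of_mem_inv_mem _ hab hinv)

theorem le_mul (a : G) {c : G} (hc : c ∈ Q.P) : Q.le a (a * c) := by
  simpa [le] using hc

theorem le_mul_left_iff (a : G) {b c : G} : Q.le (a * b) (a * c) ↔ Q.le b c := by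
  simp [le, mul_assoc]

theorem IsLub.eq_right_of_le {p q s : G} (h : Q.IsLub p q s) (hq : q ∈ Q.P)
    (hpq : Q.le p q) : s = q :=
  (le_antisymm h.2.2.1 (h.2.2.2 q hq hpq (Q.le_refl q))).symm

theorem IsLub.of_mul_left {a p q s : G} (ha : a ∈ Q.P) (hs : s ∈ Q.P)
    (h : Q.IsLub (a * p) (a * q) (a * s)) : Q.IsLub p q s := by
  obtain ⟨-, hps, hqs, hmin⟩ := h
  refine ⟨hs, (le_mul_left_iff a).mp hps, (le_mul_left_iff a).mp hqs, fun t ht hpt hqt => ?_⟩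
  exact (le_mul_left_iff a).mp
    (hmin _ (Q.mul_mem ha ht) ((le_mul_left_iff a).mpr hpt) ((le_mul_left_iff a).mpr hqt))

end QLOGroup

namespace PGraph

variable {G : Type u} [Group G] {Q : QLOGroup G} (Λ : PGraph Q)

theorem eq_ident_of_d_eq_one {α : Λ.Mor} (h : Λ.d α = 1) : α = Λ.ident (Λ.tgt α) := by
  obtain ⟨_, -, huniq⟩ := Λ.factorisation α 1 1 Q.one_mem Q.one_mem (by simp [h])
  have hl := huniq (Λ.ident (Λ.tgt α), α)
    ⟨by rw [Λ.src_ident], (Λ.id_comp α).symm, Λ.d_ident _, h⟩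
  have hr := huniq (α, Λ.ident (Λ.src α))
    ⟨by rw [Λ.tgt_ident], (Λ.comp_id α).symm, h, Λ.d_ident _⟩
  exact congrArg Prod.fst (hr.trans hl.symm)

theorem comp_left_cancel {μ α β : Λ.Mor} (hα : Λ.src μ = Λ.tgt α) (hβ : Λ.src μ = Λ.tgt β)
    (h : Λ.comp μ α = Λ.comp μ β) : α = β := by
  have hd : Λ.d α = Λ.d β := by
    simpa [Λ.d_comp _ _ hα, Λ.d_comp _ _ hβ] using congrArg Λ.d h
  obtain ⟨_, -, huniq⟩ := Λ.factorisation (Λ.comp μ α) (Λ.d μ) (Λ.d α)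
    (Λ.d_mem μ) (Λ.d_mem α) (Λ.d_comp _ _ hα)
  exact congrArg Prod.snd
    ((huniq (μ, α) ⟨hα, rfl, rfl, rfl⟩).trans (huniq (μ, β) ⟨hβ, h, rfl, hd.symm⟩).symm)

theorem MCEpairs_comp_right {μ lam : Λ.Mor} (hl : Λ.tgt lam = Λ.src μ) :
    Λ.MCEpairs μ (Λ.comp μ lam) = {(lam, Λ.ident (Λ.src lam))} := by
  have hsrc : Λ.src (Λ.comp μ lam) = Λ.src lam := Λ.src_comp μ lam hl.symm
  have hd : Λ.d (Λ.comp μ lam) = Λ.d μ * Λ.d lam := Λ.d_comp μ lam hl.symm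
  ext ⟨α, β⟩
  simp only [MCEpairs, Set.mem_ofPred_eq, Set.mem_singleton_iff, Prod.mk.injEq]
  constructor
  · rintro ⟨hα, hβ, heq, -, -, hlub⟩
    rw [hsrc] at hβ
    have hlam : Λ.src μ = Λ.tgt (Λ.comp lam β) := by rw [Λ.tgt_comp _ _ hβ, hl]
    have hαlam : α = Λ.comp lam β :=
      Λ.comp_left_cancel hα hlam (by rw [heq, Λ.comp_assoc _ _ _ hl.symm hβ])
    have hdα : Λ.d (Λ.comp μ α) = Λ.d μ * Λ.d lam := by
      rw [hd] at hlub
      exact hlub.eq_right_of_le (Q.mul_mem (Λ.d_mem μ) (Λ.d_mem lam)) (Q.le_mul _ (Λ.d_mem lam))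
    have hdβ : Λ.d β = 1 := by
      rw [Λ.d_comp _ _ hα, hαlam, Λ.d_comp _ _ hβ, ← mul_assoc] at hdα
      exact mul_eq_left.mp hdα
    have hβid : β = Λ.ident (Λ.src lam) := by rw [Λ.eq_ident_of_d_eq_one hdβ, ← hβ]
    exact ⟨by rw [hαlam, hβid, Λ.comp_id], hβid⟩
  · rintro ⟨hα, hβ⟩
    rw [hα, hβ]
    refine ⟨hl.symm, by rw [hsrc, Λ.tgt_ident], by rw [← hsrc, Λ.comp_id],
      ⟨lam, hl.symm, rfl⟩, ⟨Λ.ident (Λ.src lam), by rw [hsrc, Λ.tgt_ident],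
        by rw [← hsrc, Λ.comp_id]⟩, ?_⟩
    rw [hd]
    exact ⟨Q.mul_mem (Λ.d_mem μ) (Λ.d_mem lam), Q.le_mul _ (Λ.d_mem lam), Q.le_refl _,
      fun _ _ _ h => h⟩

theorem MCEpairs_comp_eq_empty {μ η lam : Λ.Mor} (hη : Λ.tgt η = Λ.src μ)
    (hl : Λ.tgt lam = Λ.src μ) (h : Λ.MCE η lam = ∅) :
    Λ.MCEpairs (Λ.comp μ η) (Λ.comp μ lam) = ∅ := by
  refine Set.eq_empty_of_forall_notMem ?_
  rintro ⟨α, β⟩ ⟨hα, hβ, heq, -, -, hlub⟩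
  dsimp only at hα hβ heq hlub
  rw [Λ.src_comp _ _ hη.symm] at hα
  rw [Λ.src_comp _ _ hl.symm] at hβ
  have htgt : Λ.src μ = Λ.tgt (Λ.comp η α) := by rw [Λ.tgt_comp _ _ hα, hη]
  have hcomm : Λ.comp η α = Λ.comp lam β := by
    refine Λ.comp_left_cancel htgt (by rw [Λ.tgt_comp _ _ hβ, hl]) ?_
    rw [← Λ.comp_assoc _ _ _ hη.symm hα, ← Λ.comp_assoc _ _ _ hl.symm hβ, heq]
  have hmem : Λ.comp η α ∈ Λ.MCE η lam := by
    refine ⟨⟨α, hα, rfl⟩, ⟨β, hβ, hcomm⟩, ?_⟩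
    rw [Λ.d_comp _ _ hη.symm, Λ.d_comp _ _ hl.symm, Λ.comp_assoc _ _ _ hη.symm hα,
      Λ.d_comp _ _ htgt] at hlub
    exact hlub.of_mul_left (Λ.d_mem μ) (Λ.d_mem _)
  rw [h] at hmem
  exact hmem

end PGraph

namespace PGraph.IsBalRep

variable {G : Type u} [Group G] {Q : QLOGroup G} {Λ : PGraph Q}
  {A : Type*} [NormedRing A] [StarRing A] [CStarRing A] {τ : Λ.Mor → Λ.Mor → A}

theorem mul_comp_right (hτ : Λ.IsBalRep τ) {μ lam : Λ.Mor} (hl : Λ.tgt lam = Λ.src μ) :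
    τ μ μ * τ (Λ.comp μ lam) (Λ.comp μ lam) = τ (Λ.comp μ lam) (Λ.comp μ lam) := by
  rw [hτ.2 μ μ _ _ ⟨rfl, rfl⟩ ⟨rfl, rfl⟩, Λ.MCEpairs_comp_right hl, finsum_mem_singleton,
    ← Λ.src_comp μ lam hl.symm, Λ.comp_id]

theorem mul_self (hτ : Λ.IsBalRep τ) (μ : Λ.Mor) : τ μ μ * τ μ μ = τ μ μ := by
  simpa only [Λ.comp_id] using hτ.mul_comp_right (Λ.tgt_ident (Λ.src μ))

theorem comp_mul_left (hτ : Λ.IsBalRep τ) {μ η : Λ.Mor} (hη : Λ.tgt η = Λ.src μ) :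
    τ (Λ.comp μ η) (Λ.comp μ η) * τ μ μ = τ (Λ.comp μ η) (Λ.comp μ η) := by
  have hstar : ∀ ν, star (τ ν ν) = τ ν ν := fun ν => hτ.1 ν ν ⟨rfl, rfl⟩
  rw [← hstar μ, ← hstar (Λ.comp μ η), ← star_mul, hτ.mul_comp_right hη]

theorem comp_mul_comp_eq_zero (hτ : Λ.IsBalRep τ) {μ η lam : Λ.Mor}
    (hη : Λ.tgt η = Λ.src μ) (hl : Λ.tgt lam = Λ.src μ) (h : Λ.MCE η lam = ∅) :
    τ (Λ.comp μ η) (Λ.comp μ η) * τ (Λ.comp μ lam) (Λ.comp μ lam) = 0 := by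
  rw [hτ.2 _ _ _ _ ⟨rfl, rfl⟩ ⟨rfl, rfl⟩, Λ.MCEpairs_comp_eq_empty hη hl h, finsum_mem_empty]

theorem theta_self_cons (hτ : Λ.IsBalRep τ) {μ a : Λ.Mor} (ha : Λ.tgt a = Λ.src μ)
    (rest : List Λ.Mor) :
    Λ.theta τ (a :: rest) μ μ =
      ((a :: rest).map fun lam => τ μ μ - τ (Λ.comp μ lam) (Λ.comp μ lam)).prod := by
  rw [PGraph.theta, List.map_cons, List.prod_cons, ← mul_assoc, mul_sub, hτ.mul_self,
    hτ.mul_comp_right ha]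

theorem comp_mul_theta_self (hτ : Λ.IsBalRep τ) {μ η : Λ.Mor} (hη : Λ.tgt η = Λ.src μ)
    {H : List Λ.Mor} (hH : ∀ lam ∈ H, Λ.tgt lam = Λ.src μ ∧ Λ.MCE η lam = ∅) :
    τ (Λ.comp μ η) (Λ.comp μ η) * Λ.theta τ H μ μ = τ (Λ.comp μ η) (Λ.comp μ η) := by
  rw [PGraph.theta, ← mul_assoc, hτ.comp_mul_left hη]
  induction H with
  | nil => exact mul_one _
  | cons a rest ih =>
    obtain ⟨ha, hηa⟩ := hH a List.mem_cons_self
    rw [List.map_cons, List.prod_cons, ← mul_assoc, mul_sub, hτ.comp_mul_left hη,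
      hτ.comp_mul_comp_eq_zero hη ha hηa, sub_zero]
    exact ih fun lam hlam => hH lam (List.mem_cons_of_mem a hlam)

end PGraph.IsBalRep

theorem stmt14_general {G : Type u} [Group G] {Q : QLOGroup G} (Λ : PGraph Q)
    {A : Type*} [NormedRing A] [StarRing A] [CStarRing A]
    (τ : Λ.Mor → Λ.Mor → A) (hτ : Λ.IsBalRep τ)
    (p : G) (v : Λ.Obj) (H : List Λ.Mor) (hnd : H.Nodup)
    (hH : ∀ lam ∈ H, Λ.tgt lam = v ∧ lam ≠ Λ.ident v)
    (hnz : ∀ mu : Λ.Mor, τ mu mu ≠ 0)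
    (hgap : ∀ mu : Λ.Mor, ∀ E : List Λ.Mor, E.Nodup →
      (∀ lam ∈ E, Λ.tgt lam = Λ.src mu ∧ lam ≠ Λ.ident (Λ.src mu)) →
      (∀ x : Λ.Mor, Λ.tgt x = Λ.src mu → ∃ lam ∈ E, (Λ.MCE x lam).Nonempty) →
      ((E.map fun a => τ mu mu - τ (Λ.comp mu a) (Λ.comp mu a)).prod) ≠ 0) :
    ∀ mu : Λ.Mor, Λ.d mu = p → Λ.src mu = v → Λ.theta τ H mu mu ≠ 0 := by
  rintro μ - rfl
  by_cases hex : ∀ x : Λ.Mor, Λ.tgt x = Λ.src μ → ∃ lam ∈ H, (Λ.MCE x lam).Nonempty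
  · cases H with
    | nil => simpa [PGraph.theta] using hnz μ
    | cons a rest =>
      rw [hτ.theta_self_cons (hH a List.mem_cons_self).1]
      exact hgap μ _ hnd hH hex
  · push Not at hex
    obtain ⟨η, hη, hηH⟩ := hex
    intro hθ
    apply hnz (Λ.comp μ η)
    rw [← hτ.comp_mul_theta_self hη fun lam hlam => ⟨(hH lam hlam).1, hηH lam hlam⟩, hθ,
      mul_zero]

/-- If in addition `τ_{μ,μ} ≠ 0` for all `μ` and
`∏_{α∈E}(τ_{μ,μ} − τ_{μα,μα}) ≠ 0` for every `μ` and finite exhaustive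
`E ⊆ s(μ)Λ∖{s(μ)}`, then `θ_{μ,μ} ≠ 0` for all `μ ∈ Λ^p v`. -/
theorem stmt14 {G : Type u} [Group G] {Q : QLOGroup G} (Λ : PGraph Q)
    (hFA : Λ.FinitelyAligned)
    {A : Type*} [NormedRing A] [StarRing A] [CStarRing A] [CompleteSpace A]
    [NormedAlgebra ℂ A] [StarModule ℂ A]
    (τ : Λ.Mor → Λ.Mor → A) (hτ : Λ.IsBalRep τ)
    (p : G) (v : Λ.Obj) (H : List Λ.Mor) (hnd : H.Nodup)
    (hH : ∀ lam ∈ H, Λ.tgt lam = v ∧ lam ≠ Λ.ident v)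
    (hnz : ∀ mu : Λ.Mor, τ mu mu ≠ 0)
    (hgap : ∀ mu : Λ.Mor, ∀ E : List Λ.Mor, E.Nodup →
      (∀ lam ∈ E, Λ.tgt lam = Λ.src mu ∧ lam ≠ Λ.ident (Λ.src mu)) →
      (∀ x : Λ.Mor, Λ.tgt x = Λ.src mu → ∃ lam ∈ E, (Λ.MCE x lam).Nonempty) →
      ((E.map fun a => τ mu mu - τ (Λ.comp mu a) (Λ.comp mu a)).prod) ≠ 0) :
    ∀ mu : Λ.Mor, Λ.d mu = p → Λ.src mu = v → Λ.theta τ H mu mu ≠ 0 :=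
  stmt14_general Λ τ hτ p v H hnd hH hnz hgap
end

section
/- In the hybrid graph Λ over ℕ²∗ℕ, for finite paths μ = μ₁⋯μ_m and ν = ν₁⋯ν_n with m ≤ n: MCE(μ,ν) = {ν} if n > m, μ_i = ν_i for i < m, and ν_m = μ_m ν_m′ for some ν_m′; MCE(μ,ν) = (μ₁⋯μ_{m−1})·MCE(μ_m,ν_m) if n = m and μ_i = ν_i for i < m; and MCE(μ,ν) = ∅ otherwise. In particular, Λ is finitely aligned. -/
/-- The free product monoid `ℕ² ∗ ℕ` (written multiplicatively), in which degrees of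
hybrid-graph paths live. -/
abbrev HybridDeg : Type :=
  Monoid.Coprod (Multiplicative (ℕ × ℕ)) (Multiplicative ℕ)

/-- `s` is the least common upper bound of `p` and `q` in `ℕ² ∗ ℕ` for the
left-divisibility order (`p ≤ t ↔ p ∣ t`, i.e. `∃ r, t = p * r`). -/
def HLub (p q s : HybridDeg) : Prop :=
  p ∣ s ∧ q ∣ s ∧ ∀ t : HybridDeg, p ∣ t → q ∣ t → s ∣ t

/-- The data of Spielberg's hybrid graph: a directed graph `D` and the 2-graphs
`⊔_{i=0,1} E_i × F_i` attached to it along common vertices `V`.  We record the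
nontrivial path segments (blocks): `DMor` are the paths of positive length in `D*` with
their length `Ddeg`, and `EMor` are the nonidentity paths in `⊔_i E_i* × F_i*` with
their `ℕ²`-degree `Edeg`; each system has composition, the unique factorisation property
into nontrivial pieces, and is finitely aligned. -/
structure HybridBlocks where
  V : Type
  DMor : Type
  EMor : Type
  Dsrc : DMor → V
  Dtgt : DMor → V
  Esrc : EMor → V
  Etgt : EMor → V
  Dcomp : DMor → DMor → DMor
  Ecomp : EMor → EMor → EMor
  Ddeg : DMor → ℕ
  Edeg : EMor → ℕ × ℕ
  Ddeg_pos : ∀ a, 0 < Ddeg a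
  Edeg_ne : ∀ a, Edeg a ≠ 0
  Dsrc_comp : ∀ a b, Dsrc a = Dtgt b → Dsrc (Dcomp a b) = Dsrc b
  Dtgt_comp : ∀ a b, Dsrc a = Dtgt b → Dtgt (Dcomp a b) = Dtgt a
  Esrc_comp : ∀ a b, Esrc a = Etgt b → Esrc (Ecomp a b) = Esrc b
  Etgt_comp : ∀ a b, Esrc a = Etgt b → Etgt (Ecomp a b) = Etgt a
  Dcomp_assoc : ∀ a b c, Dsrc a = Dtgt b → Dsrc b = Dtgt c →
    Dcomp (Dcomp a b) c = Dcomp a (Dcomp b c)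
  Ecomp_assoc : ∀ a b c, Esrc a = Etgt b → Esrc b = Etgt c →
    Ecomp (Ecomp a b) c = Ecomp a (Ecomp b c)
  Ddeg_comp : ∀ a b, Dsrc a = Dtgt b → Ddeg (Dcomp a b) = Ddeg a + Ddeg b
  Edeg_comp : ∀ a b, Esrc a = Etgt b → Edeg (Ecomp a b) = Edeg a + Edeg b
  Dfactor : ∀ (c : DMor) (p q : ℕ), 0 < p → 0 < q → Ddeg c = p + q →
    ∃! ab : DMor × DMor, Dsrc ab.1 = Dtgt ab.2 ∧ c = Dcomp ab.1 ab.2 ∧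
      Ddeg ab.1 = p ∧ Ddeg ab.2 = q
  Efactor : ∀ (c : EMor) (p q : ℕ × ℕ), p ≠ 0 → q ≠ 0 → Edeg c = p + q →
    ∃! ab : EMor × EMor, Esrc ab.1 = Etgt ab.2 ∧ c = Ecomp ab.1 ab.2 ∧
      Edeg ab.1 = p ∧ Edeg ab.2 = q
  DFA : ∀ a b : DMor,
    {c : DMor | (a = c ∨ ∃ t, Dsrc a = Dtgt t ∧ c = Dcomp a t) ∧
                (b = c ∨ ∃ t, Dsrc b = Dtgt t ∧ c = Dcomp b t) ∧
                Ddeg c = max (Ddeg a) (Ddeg b)}.Finite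
  EFA : ∀ a b : EMor,
    {c : EMor | (a = c ∨ ∃ t, Esrc a = Etgt t ∧ c = Ecomp a t) ∧
                (b = c ∨ ∃ t, Esrc b = Etgt t ∧ c = Ecomp b t) ∧
                Edeg c = Edeg a ⊔ Edeg b}.Finite

namespace HybridBlocks

variable (H : HybridBlocks)

/-- A block of a hybrid path: a nontrivial segment from `⊔_i E_i* × F_i*` (left) or from
`D*` (right). -/
abbrev Block : Type := H.EMor ⊕ H.DMor

/-- The source (domain) vertex of a block. -/
def bsrc : H.Block → H.V
  | .inl e => H.Esrc e
  | .inr d => H.Dsrc d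

/-- The range (codomain) vertex of a block. -/
def btgt : H.Block → H.V
  | .inl e => H.Etgt e
  | .inr d => H.Dtgt d

/-- The degree of a block in `ℕ² ∗ ℕ`. -/
def bdeg : H.Block → HybridDeg
  | .inl e => Monoid.Coprod.inl (Multiplicative.ofAdd (H.Edeg e))
  | .inr d => Monoid.Coprod.inr (Multiplicative.ofAdd (H.Ddeg d))

/-- Two blocks are of different type when one comes from `D*` and the other from
`⊔_i E_i* × F_i*`. -/
def DiffType : H.Block → H.Block → Prop
  | .inl _, .inr _ => True
  | .inr _, .inl _ => True
  | _, _ => False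

/-- A finite path of the hybrid graph (with at least one nontrivial block): a nonempty
string `μ₁ ⋯ μ_k` of blocks with `s(μ_j) = r(μ_{j+1})` and alternating types.  (The list
is ordered with ranges to the left, as for composition `λ = μν` with `r(λ) = r(μ)`.) -/
def IsPath (l : List H.Block) : Prop :=
  l ≠ [] ∧ l.Chain' fun a b => H.bsrc a = H.btgt b ∧ H.DiffType a b

/-- The degree of a path: the word `l(μ₁) ⋯ l(μ_k) ∈ ℕ² ∗ ℕ`. -/
def pdeg (l : List H.Block) : HybridDeg := (l.map H.bdeg).prod

/-- The extension (prefix) order on blocks: `b ⪯ b'` iff `b' = b` or `b' = b·t` for a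
block `t` of the same type. -/
def BLe : H.Block → H.Block → Prop
  | .inl e, .inl e' => e = e' ∨ ∃ t, H.Esrc e = H.Etgt t ∧ e' = H.Ecomp e t
  | .inr d, .inr d' => d = d' ∨ ∃ t, H.Dsrc d = H.Dtgt t ∧ d' = H.Dcomp d t
  | _, _ => False

/-- The prefix order on hybrid paths: `μ ⪯ λ` iff `λ = μν` for some finite path `ν`,
i.e. `λ` agrees with `μ` except that the final block of `μ` is extended (possibly
trivially) and further alternating blocks may follow. -/
def PLe (mu lam : List H.Block) : Prop :=
  ∃ (pre : List H.Block) (b b' : H.Block) (rest : List H.Block),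
    mu = pre ++ [b] ∧ lam = pre ++ b' :: rest ∧ H.BLe b b'

/-- Minimal common extensions of two blocks of `⊔_i E_i* × F_i*`. -/
def EMCE (a b : H.EMor) : Set H.EMor :=
  {c | H.BLe (Sum.inl a) (Sum.inl c) ∧ H.BLe (Sum.inl b) (Sum.inl c) ∧
    H.Edeg c = H.Edeg a ⊔ H.Edeg b}

/-- Minimal common extensions of two blocks of `D*`. -/
def DMCE (a b : H.DMor) : Set H.DMor :=
  {c | H.BLe (Sum.inr a) (Sum.inr c) ∧ H.BLe (Sum.inr b) (Sum.inr c) ∧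
    H.Ddeg c = max (H.Ddeg a) (H.Ddeg b)}

/-- Minimal common extensions of two blocks; empty for blocks of different type. -/
def BMCE : H.Block → H.Block → Set H.Block
  | .inl a, .inl b => Sum.inl '' H.EMCE a b
  | .inr a, .inr b => Sum.inr '' H.DMCE a b
  | _, _ => ∅

/-- The set of minimal common extensions of the hybrid paths `μ` and `ν`: common
extensions `λ` with `d(λ) = d(μ) ∨ d(ν)` in `ℕ² ∗ ℕ`. -/
def HMCE (mu nu : List H.Block) : Set (List H.Block) :=
  {lam | H.IsPath lam ∧ H.PLe mu lam ∧ H.PLe nu lam ∧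
    HLub (H.pdeg mu) (H.pdeg nu) (H.pdeg lam)}

end HybridBlocks

/-!
Degrees of hybrid paths are reduced words in `ℕ² ∗ ℕ`: alternating strings of nonzero letters.
Reduced words are normal forms (van der Waerden's trick: let the free product act on reduced
words by left multiplication, merging a letter into a head of the same side). Reading a
divisibility `d(p a) ∣ x` off the normal form of `x` shows that it holds exactly when that
normal form is `p a' r` with `a ≤ a'`. So divisibility of degrees mirrors the extension order
of paths; when `μ, ν` agree up to their last blocks, the least upper bound of their degrees is
`d(μ₁ ⋯ μ_{m-1}) (l(μ_m) ⊔ l(ν_m))`, which decides all three cases. Finiteness then follows from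
the finite alignment of `D` and of `E_i × F_i`.
-/

namespace Sum

variable {α β : Type*}

lemma isLeft_eq_of_le [LE α] [LE β] {a a' : α ⊕ β} (h : a ≤ a') : a'.isLeft = a.isLeft := by
  rcases a with m | n <;> rcases a' with m' | n' <;> simp_all

lemma isLUB_inl_pair_iff [SemilatticeSup α] [PartialOrder β] {x y z : α} :
    IsLUB {(Sum.inl x : α ⊕ β), Sum.inl y} (Sum.inl z) ↔ z = x ⊔ y := by
  have hsup : IsLUB {(Sum.inl x : α ⊕ β), Sum.inl y} (Sum.inl (x ⊔ y)) := by
    refine ⟨by simp [upperBounds], fun w hw => ?_⟩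
    rcases w with w | w <;> simp [upperBounds] at hw ⊢
    exact hw
  exact ⟨fun h => Sum.inl_injective (h.unique hsup), by rintro rfl; exact hsup⟩

lemma isLUB_inr_pair_iff [PartialOrder α] [SemilatticeSup β] {x y z : β} :
    IsLUB {(Sum.inr x : α ⊕ β), Sum.inr y} (Sum.inr z) ↔ z = x ⊔ y := by
  have hsup : IsLUB {(Sum.inr x : α ⊕ β), Sum.inr y} (Sum.inr (x ⊔ y)) := by
    refine ⟨by simp [upperBounds], fun w hw => ?_⟩
    rcases w with w | w <;> simp [upperBounds] at hw ⊢
    exact hw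
  exact ⟨fun h => Sum.inr_injective (h.unique hsup), by rintro rfl; exact hsup⟩

lemma exists_isLUB_pair [SemilatticeSup α] [SemilatticeSup β]
    {a b c : α ⊕ β} (ha : a ≤ c) (hb : b ≤ c) : ∃ s, IsLUB {a, b} s := by
  rcases a with x | x <;> rcases b with y | y <;> rcases c with z | z <;> simp at ha hb
  exacts [⟨_, isLUB_inl_pair_iff.2 rfl⟩, ⟨_, isLUB_inr_pair_iff.2 rfl⟩]

end Sum

namespace CoprodWord

open Monoid.Coprod

section NormalForm

variable {α β : Type*} [AddCommMonoid α] [AddCommMonoid β]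

def ofLetter : α ⊕ β → Multiplicative α ∗ Multiplicative β :=
  Sum.elim (fun m => inl (.ofAdd m)) (fun n => inr (.ofAdd n))

def prod (w : List (α ⊕ β)) : Multiplicative α ∗ Multiplicative β :=
  (w.map ofLetter).prod

@[simp] lemma prod_nil : prod ([] : List (α ⊕ β)) = 1 := rfl

@[simp] lemma prod_cons (a : α ⊕ β) (w : List (α ⊕ β)) :
    prod (a :: w) = ofLetter a * prod w := List.prod_cons

@[simp] lemma prod_append (u w : List (α ⊕ β)) : prod (u ++ w) = prod u * prod w := by
  simp [prod]

def IsReduced (w : List (α ⊕ β)) : Prop :=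
  (∀ a ∈ w, a.elim (· ≠ 0) (· ≠ 0)) ∧ w.IsChain fun a b => a.isLeft ≠ b.isLeft

open Classical in
noncomputable def push : α ⊕ β → List (α ⊕ β) → List (α ⊕ β)
  | .inl m, .inl m' :: w => .inl (m + m') :: w
  | .inr n, .inr n' :: w => .inr (n + n') :: w
  | .inl m, w => if m = 0 then w else .inl m :: w
  | .inr n, w => if n = 0 then w else .inr n :: w

lemma push_zero_inl (w : List (α ⊕ β)) : push (.inl 0) w = w := by
  rcases w with _ | ⟨_ | _, _⟩ <;> simp [push]

lemma push_zero_inr (w : List (α ⊕ β)) : push (.inr 0) w = w := by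
  rcases w with _ | ⟨_ | _, _⟩ <;> simp [push]

@[simp] lemma ofLetter_inl (m : α) : ofLetter (.inl m : α ⊕ β) = inl (.ofAdd m) := rfl

@[simp] lemma ofLetter_inr (n : β) : ofLetter (.inr n : α ⊕ β) = inr (.ofAdd n) := rfl

lemma isReduced_cons_iff {a : α ⊕ β} {w : List (α ⊕ β)} :
    IsReduced (a :: w) ↔
      a.elim (· ≠ 0) (· ≠ 0) ∧ (∀ b ∈ w.head?, a.isLeft ≠ b.isLeft) ∧ IsReduced w := by
  simp only [IsReduced, List.mem_cons, forall_eq_or_imp, List.isChain_cons]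
  tauto

lemma prod_push (a : α ⊕ β) (w : List (α ⊕ β)) : prod (push a w) = ofLetter a * prod w := by
  rcases a with m | n <;> rcases w with _ | ⟨m' | n', t⟩ <;>
    simp only [push] <;> (try split_ifs) <;> simp_all [ofAdd_add, mul_assoc]

lemma push_cons_of_isLeft_ne {a b : α ⊕ β} (ha : a.elim (· ≠ 0) (· ≠ 0))
    (hab : a.isLeft ≠ b.isLeft) (w : List (α ⊕ β)) : push a (b :: w) = a :: b :: w := by
  rcases a with m | n <;> rcases b with m' | n' <;> simp_all [push]

lemma push_nil {a : α ⊕ β} (ha : a.elim (· ≠ 0) (· ≠ 0)) : push a [] = [a] := by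
  rcases a with m | n <;> simp_all [push]

lemma push_add_inl [Subsingleton (AddUnits α)] (m m' : α) (w : List (α ⊕ β)) :
    push (.inl (m + m')) w = push (.inl m) (push (.inl m') w) := by
  obtain rfl | hm' := eq_or_ne m' 0
  · rw [add_zero, push_zero_inl]
  · rcases w with _ | ⟨_ | _, _⟩ <;> simp [push, hm', add_assoc, add_eq_zero]

lemma push_add_inr [Subsingleton (AddUnits β)] (n n' : β) (w : List (α ⊕ β)) :
    push (.inr (n + n')) w = push (.inr n) (push (.inr n') w) := by
  obtain rfl | hn' := eq_or_ne n' 0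
  · rw [add_zero, push_zero_inr]
  · rcases w with _ | ⟨_ | _, _⟩ <;> simp [push, hn', add_assoc, add_eq_zero]

variable [Subsingleton (AddUnits α)] [Subsingleton (AddUnits β)]

noncomputable def act :
    Multiplicative α ∗ Multiplicative β →* Function.End (List (α ⊕ β)) :=
  lift
    { toFun := fun m => push (.inl m.toAdd)
      map_one' := funext push_zero_inl
      map_mul' := fun m m' => funext (push_add_inl m.toAdd m'.toAdd) }
    { toFun := fun n => push (.inr n.toAdd)
      map_one' := funext push_zero_inr
      map_mul' := fun n n' => funext (push_add_inr n.toAdd n'.toAdd) }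

noncomputable def normalForm (x : Multiplicative α ∗ Multiplicative β) : List (α ⊕ β) :=
  act x []

lemma act_mul (x y : Multiplicative α ∗ Multiplicative β) (w : List (α ⊕ β)) :
    act (x * y) w = act x (act y w) := by
  rw [map_mul]; rfl

lemma act_ofLetter (a : α ⊕ β) : act (ofLetter a) = push a := by
  cases a <;> rfl

lemma prod_act (x : Multiplicative α ∗ Multiplicative β) (w : List (α ⊕ β)) :
    prod (act x w) = x * prod w := by
  induction x using Monoid.Coprod.induction_on' generalizing w with
  | one => rw [map_one, one_mul]; rfl
  | inl_mul m x ih => rw [act_mul, mul_assoc, ← ih]; exact prod_push (.inl m.toAdd) _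
  | inr_mul n x ih => rw [act_mul, mul_assoc, ← ih]; exact prod_push (.inr n.toAdd) _

@[simp] lemma prod_normalForm (x : Multiplicative α ∗ Multiplicative β) :
    prod (normalForm x) = x :=
  (prod_act x []).trans (mul_one x)

lemma isReduced_push (a : α ⊕ β) {w : List (α ⊕ β)} (hw : IsReduced w) :
    IsReduced (push a w) := by
  rcases a with m | n <;> rcases w with _ | ⟨m' | n', t⟩ <;>
    simp only [push] <;> (try split_ifs) <;> simp_all [isReduced_cons_iff, add_eq_zero]

lemma isReduced_act (x : Multiplicative α ∗ Multiplicative β)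
    {w : List (α ⊕ β)} (hw : IsReduced w) : IsReduced (act x w) := by
  induction x using Monoid.Coprod.induction_on' generalizing w with
  | one => exact hw
  | inl_mul m x ih => rw [act_mul]; exact isReduced_push (.inl m.toAdd) (ih hw)
  | inr_mul n x ih => rw [act_mul]; exact isReduced_push (.inr n.toAdd) (ih hw)

lemma isReduced_normalForm (x : Multiplicative α ∗ Multiplicative β) :
    IsReduced (normalForm x) :=
  isReduced_act x ⟨by simp, List.isChain_nil⟩

lemma act_prod_append_cons {p : List (α ⊕ β)} {b : α ⊕ β} (h : IsReduced (p ++ [b]))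
    (v : List (α ⊕ β)) : act (prod p) (b :: v) = p ++ b :: v := by
  induction p with
  | nil => rfl
  | cons x p ih =>
    rw [List.cons_append, isReduced_cons_iff] at h
    obtain ⟨hx, hxp, hp⟩ := h
    rw [prod_cons, act_mul, ih hp, act_ofLetter]
    cases p with
    | nil => exact push_cons_of_isLeft_ne hx (hxp b rfl) v
    | cons y p => exact push_cons_of_isLeft_ne hx (hxp y rfl) _

lemma normalForm_prod {w : List (α ⊕ β)} (hw : IsReduced w) : normalForm (prod w) = w := by
  rcases List.eq_nil_or_concat w with rfl | ⟨p, a, rfl⟩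
  · rfl
  · rw [List.concat_eq_append] at hw ⊢
    have ha : a.elim (· ≠ 0) (· ≠ 0) := hw.1 a (by simp)
    have hprod : prod (p ++ [a]) = prod p * ofLetter a := by simp
    rw [normalForm, hprod, act_mul, act_ofLetter, push_nil ha]
    exact act_prod_append_cons hw []

end NormalForm

section Order

variable {α β : Type*} [AddCommMonoid α] [PartialOrder α] [CanonicallyOrderedAdd α]
  [AddCommMonoid β] [PartialOrder β] [CanonicallyOrderedAdd β]

lemma elim_ne_zero_of_le {a a' : α ⊕ β} (ha : a.elim (· ≠ 0) (· ≠ 0)) (h : a ≤ a') :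
    a'.elim (· ≠ 0) (· ≠ 0) := by
  rcases a with m | n <;> rcases a' with m' | n' <;> simp_all <;> rintro rfl <;>
    simp_all [nonpos_iff_eq_zero]

lemma IsReduced.concat_of_le {p : List (α ⊕ β)} {a a' : α ⊕ β} (h : IsReduced (p ++ [a]))
    (ha : a ≤ a') : IsReduced (p ++ [a']) := by
  obtain ⟨hne, hchain⟩ := h
  rw [List.isChain_append] at hchain
  refine ⟨?_, List.isChain_append.2 ⟨hchain.1, List.isChain_singleton a', ?_⟩⟩
  · simp only [List.mem_append, List.mem_singleton] at hne ⊢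
    rintro x (hx | rfl)
    · exact hne x (.inl hx)
    · exact elim_ne_zero_of_le (hne a (.inr rfl)) ha
  · simp only [List.head?_cons, Option.mem_def, Option.some.injEq, forall_eq',
      Sum.isLeft_eq_of_le ha]
    exact fun x hx => hchain.2.2 x hx a rfl

lemma ofLetter_dvd_ofLetter {a a' : α ⊕ β} (h : a ≤ a') : ofLetter a ∣ ofLetter a' := by
  rcases a with m | n <;> rcases a' with m' | n' <;> simp at h
  · obtain ⟨k, rfl⟩ := exists_add_of_le h
    exact ⟨inl (.ofAdd k), by simp [ofAdd_add]⟩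
  · obtain ⟨k, rfl⟩ := exists_add_of_le h
    exact ⟨inr (.ofAdd k), by simp [ofAdd_add]⟩

lemma prod_concat_dvd_prod_of_le (p : List (α ⊕ β)) {a a' : α ⊕ β} (h : a ≤ a')
    (r : List (α ⊕ β)) : prod (p ++ [a]) ∣ prod (p ++ a' :: r) := by
  simpa [mul_assoc] using mul_dvd_mul_left (prod p) ((ofLetter_dvd_ofLetter h).mul_right (prod r))

lemma exists_push_eq_cons_le {a : α ⊕ β} (ha : a.elim (· ≠ 0) (· ≠ 0)) (w : List (α ⊕ β)) :
    ∃ a' r, push a w = a' :: r ∧ a ≤ a' := by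
  rcases a with m | n <;> rcases w with _ | ⟨m' | n', t⟩ <;> simp_all [push]

-- The normal form of `prod (p ++ [a]) * x` is `p` followed by `push a (normalForm x)`.
lemma exists_eq_append_cons_le_of_prod_dvd {p q : List (α ⊕ β)} {a : α ⊕ β}
    (hp : IsReduced (p ++ [a])) (hq : IsReduced q) (h : prod (p ++ [a]) ∣ prod q) :
    ∃ a' r, q = p ++ a' :: r ∧ a ≤ a' := by
  obtain ⟨x, hx⟩ := h
  obtain ⟨a', r, hpush, ha'⟩ := exists_push_eq_cons_le (hp.1 a (by simp)) (normalForm x)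
  refine ⟨a', r, ?_, ha'⟩
  rw [← normalForm_prod hq, hx, normalForm, act_mul, prod_append, act_mul, prod_cons, prod_nil,
    mul_one, act_ofLetter, ← normalForm, hpush]
  exact act_prod_append_cons (hp.concat_of_le ha') r

lemma eq_nil_and_le_of_prod_dvd {p r : List (α ⊕ β)} {a a' : α ⊕ β}
    (hu : IsReduced (p ++ a' :: r)) (hv : IsReduced (p ++ [a]))
    (h : prod (p ++ a' :: r) ∣ prod (p ++ [a])) : r = [] ∧ a' ≤ a := by
  obtain ⟨init, z, hu_eq⟩ := (List.eq_nil_or_concat (p ++ a' :: r)).resolve_left (by simp)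
  rw [List.concat_eq_append] at hu_eq
  rw [hu_eq] at hu h
  obtain ⟨z', r', hv_eq, hz⟩ := exists_eq_append_cons_le_of_prod_dvd hu hv h
  obtain rfl : r = [] := by
    have h1 := congrArg List.length hu_eq
    have h2 := congrArg List.length hv_eq
    simp only [List.length_append, List.length_cons, List.length_nil] at h1 h2
    exact List.eq_nil_of_length_eq_zero (by omega)
  obtain ⟨rfl, rfl⟩ := List.append_singleton_inj.mp hu_eq
  obtain ⟨rfl, -⟩ := List.cons_eq_cons.mp (List.append_cancel_left hv_eq)
  exact ⟨rfl, hz⟩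

lemma prod_concat_dvd_of_isLUB {p : List (α ⊕ β)} {a b s : α ⊕ β}
    (ha : IsReduced (p ++ [a])) (hb : IsReduced (p ++ [b])) (hs : IsLUB {a, b} s)
    {t : Multiplicative α ∗ Multiplicative β}
    (hat : prod (p ++ [a]) ∣ t) (hbt : prod (p ++ [b]) ∣ t) : prod (p ++ [s]) ∣ t := by
  rw [← prod_normalForm t] at hat hbt ⊢
  obtain ⟨a', r, ht, haa'⟩ :=
    exists_eq_append_cons_le_of_prod_dvd ha (isReduced_normalForm t) hat
  obtain ⟨b', r', ht', hbb'⟩ :=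
    exists_eq_append_cons_le_of_prod_dvd hb (isReduced_normalForm t) hbt
  obtain ⟨rfl, rfl⟩ : a' = b' ∧ r = r' := by simpa [ht] using ht'
  rw [ht]
  exact prod_concat_dvd_prod_of_le p (hs.2 (by simp [upperBounds, haa', hbb'])) r

end Order

end CoprodWord

namespace HybridBlocks

open CoprodWord

def letter (H : HybridBlocks) (b : H.Block) : (ℕ × ℕ) ⊕ ℕ := Sum.map H.Edeg H.Ddeg b

variable {H : HybridBlocks}

lemma pdeg_eq_prod (l : List H.Block) : H.pdeg l = prod (l.map H.letter) := by
  simp only [pdeg, prod, List.map_map]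
  congr 1
  exact List.map_congr_left fun b _ => by cases b <;> rfl

lemma diffType_iff {a b : H.Block} :
    H.DiffType a b ↔ (H.letter a).isLeft ≠ (H.letter b).isLeft := by
  cases a <;> cases b <;> simp [DiffType, letter]

lemma IsPath.isReduced {l : List H.Block} (h : H.IsPath l) : IsReduced (l.map H.letter) := by
  refine ⟨?_, ?_⟩
  · simp only [List.mem_map]
    rintro _ ⟨b | b, -, rfl⟩
    exacts [H.Edeg_ne b, (H.Ddeg_pos b).ne']
  · exact (List.isChain_map _).2 (h.2.imp fun a b hab => diffType_iff.1 hab.2)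

lemma letter_le_of_BLe {b b' : H.Block} (h : H.BLe b b') : H.letter b ≤ H.letter b' := by
  rcases b with e | d <;> rcases b' with e' | d' <;> simp only [BLe] at h
  · rcases h with rfl | ⟨t, ht, rfl⟩
    · rfl
    · simp [letter, H.Edeg_comp e t ht]
  · rcases h with rfl | ⟨t, ht, rfl⟩
    · rfl
    · simp [letter, H.Ddeg_comp d t ht]

lemma eq_of_BLe_of_letter_le {b b' : H.Block} (h : H.BLe b b')
    (h' : H.letter b' ≤ H.letter b) : b = b' := by
  rcases b with e | d <;> rcases b' with e' | d' <;> simp only [BLe] at h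
  · rcases h with rfl | ⟨t, ht, rfl⟩
    · rfl
    · simp [letter, H.Edeg_comp e t ht, H.Edeg_ne t] at h'
  · rcases h with rfl | ⟨t, ht, rfl⟩
    · rfl
    · simp [letter, H.Ddeg_comp d t ht, (H.Ddeg_pos t).ne'] at h'

lemma BLe.btgt_eq {b b' : H.Block} (h : H.BLe b b') : H.btgt b' = H.btgt b := by
  rcases b with e | d <;> rcases b' with e' | d' <;> simp only [BLe] at h
  · rcases h with rfl | ⟨t, ht, rfl⟩
    exacts [rfl, H.Etgt_comp e t ht]
  · rcases h with rfl | ⟨t, ht, rfl⟩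
    exacts [rfl, H.Dtgt_comp d t ht]

lemma IsPath.concat_of_BLe {pre : List H.Block} {b c : H.Block} (h : H.IsPath (pre ++ [b]))
    (hbc : H.BLe b c) : H.IsPath (pre ++ [c]) := by
  refine ⟨by simp, ?_⟩
  have hchain := List.isChain_append.1 h.2
  refine List.isChain_append.2 ⟨hchain.1, List.isChain_singleton c, ?_⟩
  simp only [List.head?_cons, Option.mem_def, Option.some.injEq, forall_eq']
  intro x hx
  obtain ⟨hsrc, hdiff⟩ := hchain.2.2 x hx b rfl
  refine ⟨hsrc.trans hbc.btgt_eq.symm, diffType_iff.2 ?_⟩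
  rw [Sum.isLeft_eq_of_le (letter_le_of_BLe hbc)]
  exact diffType_iff.1 hdiff

lemma PLe_refl {l : List H.Block} (h : l ≠ []) : H.PLe l l := by
  obtain ⟨pre, b, rfl⟩ := (List.eq_nil_or_concat l).resolve_left h
  exact ⟨pre, b, b, [], by simp, by simp, by cases b <;> exact .inl rfl⟩

lemma PLe_concat_iff {pre lam : List H.Block} {b : H.Block} :
    H.PLe (pre ++ [b]) lam ↔ ∃ c rest, lam = pre ++ c :: rest ∧ H.BLe b c := by
  constructor
  · rintro ⟨pre', b', c, rest, h, rfl, hbc⟩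
    obtain ⟨rfl, rfl⟩ := List.append_singleton_inj.1 h
    exact ⟨c, rest, rfl, hbc⟩
  · rintro ⟨c, rest, rfl, hbc⟩
    exact ⟨pre, b, c, rest, rfl, rfl, hbc⟩

lemma pdeg_dvd_of_PLe {mu lam : List H.Block} (h : H.PLe mu lam) : H.pdeg mu ∣ H.pdeg lam := by
  obtain ⟨pre, b, b', rest, rfl, rfl, hb⟩ := h
  simpa [pdeg_eq_prod] using prod_concat_dvd_prod_of_le _ (letter_le_of_BLe hb) _

lemma eq_of_PLe_of_pdeg_dvd {nu lam : List H.Block} (hlam : H.IsPath lam) (hnu : H.IsPath nu)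
    (h : H.PLe nu lam) (hd : H.pdeg lam ∣ H.pdeg nu) : lam = nu := by
  obtain ⟨pre, c, c', rest, rfl, rfl, hc⟩ := h
  have hlam' := hlam.isReduced
  have hnu' := hnu.isReduced
  simp only [pdeg_eq_prod, List.map_append, List.map_cons, List.map_nil] at hd hlam' hnu'
  obtain ⟨hrest, hle⟩ := eq_nil_and_le_of_prod_dvd hlam' hnu' hd
  rw [List.map_eq_nil_iff.1 hrest, eq_of_BLe_of_letter_le hc hle]

theorem HMCE_eq_singleton_of_PLe {mu nu : List H.Block} (hnu : H.IsPath nu) (h : H.PLe mu nu) :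
    H.HMCE mu nu = {nu} := by
  ext lam
  constructor
  · rintro ⟨hlam, -, hnl, hlub⟩
    exact eq_of_PLe_of_pdeg_dvd hlam hnu hnl (hlub.2.2 _ (pdeg_dvd_of_PLe h) dvd_rfl)
  · rintro rfl
    exact ⟨hnu, h, PLe_refl hnu.1, pdeg_dvd_of_PLe h, dvd_rfl, fun _ _ ht => ht⟩

lemma mem_BMCE_iff {b b' c : H.Block} :
    c ∈ H.BMCE b b' ↔
      H.BLe b c ∧ H.BLe b' c ∧ IsLUB {H.letter b, H.letter b'} (H.letter c) := by
  rcases b with e | d <;> rcases b' with e' | d' <;> rcases c with f | f <;>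
    simp [BMCE, EMCE, DMCE, BLe, letter, Sum.isLUB_inl_pair_iff, Sum.isLUB_inr_pair_iff]

lemma HMCE_concat_subset {pre : List H.Block} {b b' : H.Block} (hmu : H.IsPath (pre ++ [b])) :
    H.HMCE (pre ++ [b]) (pre ++ [b']) ⊆ {l | ∃ c ∈ H.BMCE b b', l = pre ++ [c]} := by
  rintro lam ⟨hlam, hbl, hb'l, hlub⟩
  obtain ⟨c, rest, rfl, hbc⟩ := PLe_concat_iff.1 hbl
  obtain ⟨c', rest', heq, hb'c⟩ := PLe_concat_iff.1 hb'l
  obtain ⟨rfl, rfl⟩ : c = c' ∧ rest = rest' := by simpa using heq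
  obtain ⟨s, hs⟩ := Sum.exists_isLUB_pair (letter_le_of_BLe hbc) (letter_le_of_BLe hb'c)
  have hmu' := hmu.isReduced
  have hlam' := hlam.isReduced
  simp only [List.map_append, List.map_cons, List.map_nil] at hmu' hlam'
  have hbs : H.letter b ≤ s := hs.1 (by simp)
  have hb's : H.letter b' ≤ s := hs.1 (by simp)
  have hdvd : H.pdeg (pre ++ c :: rest) ∣ prod (pre.map H.letter ++ [s]) := by
    refine hlub.2.2 _ ?_ ?_ <;> rw [pdeg_eq_prod, List.map_append, List.map_singleton]
    exacts [prod_concat_dvd_prod_of_le _ hbs [], prod_concat_dvd_prod_of_le _ hb's []]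
  rw [pdeg_eq_prod, List.map_append, List.map_cons] at hdvd
  obtain ⟨hrest, hcs⟩ := eq_nil_and_le_of_prod_dvd hlam' (hmu'.concat_of_le hbs) hdvd
  have hc_eq : H.letter c = s :=
    hcs.antisymm (hs.2 (by simp [upperBounds, letter_le_of_BLe hbc, letter_le_of_BLe hb'c]))
  exact ⟨c, mem_BMCE_iff.2 ⟨hbc, hb'c, hc_eq ▸ hs⟩, by rw [List.map_eq_nil_iff.1 hrest]⟩

lemma concat_mem_HMCE {pre : List H.Block} {b b' c : H.Block} (hmu : H.IsPath (pre ++ [b]))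
    (hnu : H.IsPath (pre ++ [b'])) (hc : c ∈ H.BMCE b b') :
    pre ++ [c] ∈ H.HMCE (pre ++ [b]) (pre ++ [b']) := by
  obtain ⟨hbc, hb'c, hs⟩ := mem_BMCE_iff.1 hc
  have hbl : H.PLe (pre ++ [b]) (pre ++ [c]) := PLe_concat_iff.2 ⟨c, [], rfl, hbc⟩
  have hb'l : H.PLe (pre ++ [b']) (pre ++ [c]) := PLe_concat_iff.2 ⟨c, [], rfl, hb'c⟩
  refine ⟨hmu.concat_of_BLe hbc, hbl, hb'l, pdeg_dvd_of_PLe hbl, pdeg_dvd_of_PLe hb'l,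
    fun t hbt hb't => ?_⟩
  have hmu' := hmu.isReduced
  have hnu' := hnu.isReduced
  simp only [pdeg_eq_prod, List.map_append, List.map_cons, List.map_nil] at hbt hb't hmu' hnu' ⊢
  exact prod_concat_dvd_of_isLUB hmu' hnu' hs hbt hb't

theorem HMCE_concat {pre : List H.Block} {b b' : H.Block} (hmu : H.IsPath (pre ++ [b]))
    (hnu : H.IsPath (pre ++ [b'])) :
    H.HMCE (pre ++ [b]) (pre ++ [b']) = {l | ∃ c ∈ H.BMCE b b', l = pre ++ [c]} :=
  (HMCE_concat_subset hmu).antisymm fun _ ⟨_, hc, hl⟩ => hl ▸ concat_mem_HMCE hmu hnu hc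

lemma exists_of_PLe_of_PLe {mu nu lam : List H.Block} (hmu : H.PLe mu lam) (hnu : H.PLe nu lam)
    (hle : mu.length ≤ nu.length) :
    ∃ (pre : List H.Block) (b b' : H.Block) (rest : List H.Block),
      mu = pre ++ [b] ∧ nu = pre ++ b' :: rest ∧ (rest = [] ∨ H.BLe b b') := by
  obtain ⟨pre, b, c, rest, rfl, rfl, hbc⟩ := hmu
  obtain ⟨pre', b', c', rest', rfl, heq, -⟩ := hnu
  simp only [List.length_append, List.length_singleton, add_le_add_iff_right] at hle
  rcases List.append_eq_append_iff.1 heq with ⟨_ | ⟨d, mid⟩, rfl, -⟩ | ⟨mid, rfl, -⟩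
  · exact ⟨pre, b, b', [], rfl, by simp, .inl rfl⟩
  · obtain rfl : c = d := (List.cons_eq_cons.1 (by simpa using heq)).1
    exact ⟨pre, b, c, mid ++ [b'], rfl, by simp, .inr hbc⟩
  · obtain rfl : mid = [] := by simpa using hle
    exact ⟨pre', b, b', [], by simp, by simp, .inl rfl⟩

theorem HMCE_eq_empty {mu nu : List H.Block} (hle : mu.length ≤ nu.length)
    (h : ¬ ∃ (pre : List H.Block) (b b' : H.Block) (rest : List H.Block),
      mu = pre ++ [b] ∧ nu = pre ++ b' :: rest ∧ (rest = [] ∨ H.BLe b b')) :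
    H.HMCE mu nu = ∅ :=
  Set.eq_empty_of_forall_notMem fun _ ⟨_, hmu, hnu, _⟩ => h (exists_of_PLe_of_PLe hmu hnu hle)

lemma HMCE_comm (mu nu : List H.Block) : H.HMCE mu nu = H.HMCE nu mu := by
  ext lam
  exact ⟨fun ⟨hlam, hmu, hnu, hm, hn, hl⟩ =>
      ⟨hlam, hnu, hmu, hn, hm, fun t ht ht' => hl t ht' ht⟩,
    fun ⟨hlam, hnu, hmu, hn, hm, hl⟩ => ⟨hlam, hmu, hnu, hm, hn, fun t ht ht' => hl t ht' ht⟩⟩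

lemma finite_BMCE (b b' : H.Block) : (H.BMCE b b').Finite := by
  rcases b with e | d <;> rcases b' with e' | d'
  · exact ((H.EFA e e').subset fun _ hc => hc).image _
  · exact Set.finite_empty
  · exact Set.finite_empty
  · exact ((H.DFA d d').subset fun _ hc => hc).image _

lemma finite_HMCE_of_length_le {mu nu : List H.Block} (hmu : H.IsPath mu) (hnu : H.IsPath nu)
    (hle : mu.length ≤ nu.length) : (H.HMCE mu nu).Finite := by
  by_cases h : ∃ (pre : List H.Block) (b b' : H.Block) (rest : List H.Block),
      mu = pre ++ [b] ∧ nu = pre ++ b' :: rest ∧ (rest = [] ∨ H.BLe b b')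
  · obtain ⟨pre, b, b', rest, rfl, rfl, rfl | hb⟩ := h
    · rw [HMCE_concat hmu hnu]
      exact ((finite_BMCE b b').image (pre ++ [·])).subset fun _ ⟨c, hc, hl⟩ => ⟨c, hc, hl.symm⟩
    · rw [HMCE_eq_singleton_of_PLe hnu ⟨pre, b, b', rest, rfl, rfl, hb⟩]
      exact Set.finite_singleton _
  · rw [HMCE_eq_empty hle h]
    exact Set.finite_empty

theorem finite_HMCE {mu nu : List H.Block} (hmu : H.IsPath mu) (hnu : H.IsPath nu) :
    (H.HMCE mu nu).Finite := by
  rcases le_total mu.length nu.length with hle | hle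
  · exact finite_HMCE_of_length_le hmu hnu hle
  · exact HMCE_comm nu mu ▸ finite_HMCE_of_length_le hnu hmu hle

end HybridBlocks

/-- In the hybrid graph `Λ` over `ℕ² ∗ ℕ`, for finite paths
`μ = μ₁⋯μ_m` and `ν = ν₁⋯ν_n` with `m ≤ n`:
`MCE(μ,ν) = {ν}` if `n > m`, `μ_i = ν_i` for `i < m` and `ν_m = μ_m ν_m'`;
`MCE(μ,ν) = (μ₁⋯μ_{m-1})·MCE(μ_m,ν_m)` if `n = m` and `μ_i = ν_i` for `i < m`; and
`MCE(μ,ν) = ∅` otherwise.  In particular, `Λ` is finitely aligned. -/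
theorem stmt18 (H : HybridBlocks) :
    (∀ mu nu : List H.Block, H.IsPath mu → H.IsPath nu → mu.length ≤ nu.length →
      (∀ (pre : List H.Block) (b b' : H.Block) (rest : List H.Block),
        mu = pre ++ [b] → nu = pre ++ b' :: rest → rest ≠ [] → H.BLe b b' →
        H.HMCE mu nu = {nu}) ∧
      (∀ (pre : List H.Block) (b b' : H.Block),
        mu = pre ++ [b] → nu = pre ++ [b'] →
        H.HMCE mu nu = {l | ∃ c ∈ H.BMCE b b', l = pre ++ [c]}) ∧
      ((¬ ∃ (pre : List H.Block) (b b' : H.Block) (rest : List H.Block),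
          mu = pre ++ [b] ∧ nu = pre ++ b' :: rest ∧ (rest = [] ∨ H.BLe b b')) →
        H.HMCE mu nu = ∅)) ∧
    ∀ mu nu : List H.Block, H.IsPath mu → H.IsPath nu → (H.HMCE mu nu).Finite := by
  refine ⟨fun mu nu hmu hnu hle => ⟨?_, ?_, HybridBlocks.HMCE_eq_empty hle⟩,
    fun mu nu => HybridBlocks.finite_HMCE⟩
  · rintro pre b b' rest rfl rfl - hb
    exact HybridBlocks.HMCE_eq_singleton_of_PLe hnu ⟨pre, b, b', rest, rfl, rfl, hb⟩
  · rintro pre b b' rfl rfl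
    exact HybridBlocks.HMCE_concat hmu hnu
end
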